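/- arXiv:1611.09825 — 6 statements merged into one kernel-verified Lean document; each statement's English description precedes it below -/
import Mathlib

section
/- On a homogeneous ring of N ≥ 3 oscillators with zero power injections and coupling K > 0, the number of distinct values Δ ∈ (−π/2, π/2) satisfying N·Δ ∈ 2π·ℤ is exactly 2·⌊(N−1)/4⌋ + 1. -/
open Real

theorem ring_number_of_normal_fixed_points (N : ℕ) (hN : 3 ≤ N) (K : ℝ) (hK : 0 < K) :
    {Δ : ℝ | Δ ∈ Set.Ioo (-(Real.pi / 2)) (Real.pi / 2) ∧
        ∃ m : ℤ, (N : ℝ) * Δ = 2 * Real.pi * m}.ncard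
      = 2 * ((N - 1) / 4) + 1 := by
  set k : ℕ := (N - 1) / 4 with hk
  have hNR : (0:ℝ) < N := by positivity
  have hπ := Real.pi_pos
  have hk1' : 4 * k ≤ N - 1 := by omega
  have hk2 : N - 1 < 4 * (k + 1) := by omega
  have hset : {Δ : ℝ | Δ ∈ Set.Ioo (-(Real.pi / 2)) (Real.pi / 2) ∧
        ∃ m : ℤ, (N : ℝ) * Δ = 2 * Real.pi * m}
      = (fun m : ℤ => 2 * Real.pi * m / N) '' Set.Icc (-(k:ℤ)) (k:ℤ) := by
    ext Δ
    simp only [Set.mem_setOf_eq, Set.mem_Ioo, Set.mem_image, Set.mem_Icc]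
    constructor
    · rintro ⟨⟨h1, h2⟩, m, hm⟩
      have hΔ : Δ = 2 * Real.pi * m / N := by field_simp; linarith [hm]
      refine ⟨m, ?_, hΔ.symm⟩
      subst hΔ
      rw [div_lt_iff₀ hNR] at h2
      rw [neg_lt, ← neg_div, div_lt_iff₀ hNR] at h1
      have h2' : 4 * (m:ℝ) < N := by nlinarith
      have h1' : -(N:ℝ) < 4 * m := by nlinarith
      have h2i : 4 * m < (N:ℤ) := by exact_mod_cast h2'
      have h1i : -(N:ℤ) < 4 * m := by exact_mod_cast h1'
      have c1 : ((4 * k : ℕ) : ℤ) ≤ ((N - 1 : ℕ) : ℤ) := by exact_mod_cast hk1'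
      have c2 : ((N - 1 : ℕ) : ℤ) < ((4 * (k + 1) : ℕ) : ℤ) := by exact_mod_cast hk2
      have hsub : ((N - 1 : ℕ) : ℤ) = (N : ℤ) - 1 := by
        have : 1 ≤ N := by omega
        push_cast [this]; ring
      push_cast at c1 c2
      rw [hsub] at c1 c2
      omega
    · rintro ⟨m, ⟨hm1, hm2⟩, hΔ⟩
      have c1 : ((4 * k : ℕ) : ℤ) ≤ ((N - 1 : ℕ) : ℤ) := by exact_mod_cast hk1'
      have c2 : ((N - 1 : ℕ) : ℤ) < ((4 * (k + 1) : ℕ) : ℤ) := by exact_mod_cast hk2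
      have hsub : ((N - 1 : ℕ) : ℤ) = (N : ℤ) - 1 := by
        have : 1 ≤ N := by omega
        push_cast [this]; ring
      push_cast at c1 c2
      rw [hsub] at c1 c2
      have h1i : -(N:ℤ) < 4 * m := by omega
      have h2i : 4 * m < (N:ℤ) := by omega
      have h1' : -(N:ℝ) < 4 * m := by exact_mod_cast h1i
      have h2' : 4 * (m:ℝ) < (N:ℝ) := by exact_mod_cast h2i
      subst hΔ
      refine ⟨⟨?_, ?_⟩, m, by field_simp⟩
      · rw [neg_lt, ← neg_div, div_lt_iff₀ hNR]; nlinarith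
      · rw [div_lt_iff₀ hNR]; nlinarith
  rw [hset]
  have hinj : Function.Injective (fun m : ℤ => 2 * Real.pi * m / N) := by
    intro a b hab
    simp only at hab
    field_simp [hNR.ne'] at hab
    exact_mod_cast hab
  rw [Set.ncard_image_of_injective _ hinj, ← Finset.coe_Icc, Set.ncard_coe_finset,
    Int.card_Icc]
  have : (k:ℤ) + 1 - (-(k:ℤ)) = 2 * k + 1 := by ring
  rw [this]
  omega
end

section
/- Let N be a multiple of 4 and define θ : ZMod N → ℝ by θ(j) = (j div 2)·π + (j mod 2)·δ for any δ ∈ [0, π), i.e., θ = (0, δ, π, π+δ, 2π, 2π+δ, …). Then for every j, sin(θ(j+1) − θ(j)) = sin(δ), so θ is a fixed point of the homogeneous Kuramoto ring with zero natural frequencies: ∑ over neighbors of sin(θ(ℓ) − θ(j)) = 0 for all j. -/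
open Real

theorem continuum_of_fixed_points (N : ℕ) (hN0 : 0 < N) (hN4 : 4 ∣ N)
    (δ : ℝ) (hδ : δ ∈ Set.Ico 0 Real.pi)
    (θ : ZMod N → ℝ)
    (hθ : ∀ j : ZMod N, θ j = (↑(j.val / 2)) * Real.pi + (↑(j.val % 2)) * δ) :
    ∀ j : ZMod N,
      Real.sin (θ (j + 1) - θ j) = Real.sin δ ∧
      Real.sin (θ (j + 1) - θ j) + Real.sin (θ (j - 1) - θ j) = 0 := by
  obtain ⟨m, hm⟩ := hN4
  have hm1 : 1 ≤ m := by omega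
  have hN1 : 1 < N := by omega
  haveI : NeZero N := ⟨by omega⟩
  haveI : Fact (1 < N) := ⟨hN1⟩
  have key : ∀ j : ZMod N, Real.sin (θ (j + 1) - θ j) = Real.sin δ := by
    intro j
    have hv : j.val < N := ZMod.val_lt j
    have hadd : (j + 1).val = (j.val + 1) % N := by
      rw [ZMod.val_add, ZMod.val_one]
    rw [hθ, hθ, hadd]
    by_cases hB : j.val + 1 = N
    · -- j.val = N - 1 = 4m - 1
      have h0 : (j.val + 1) % N = 0 := by rw [hB, Nat.mod_self]
      have hdiv : j.val / 2 = 2 * m - 1 := by omega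
      have hmod : j.val % 2 = 1 := by omega
      rw [h0, hdiv, hmod]
      have hcast : ((2 * m - 1 : ℕ) : ℝ) = 2 * (m : ℝ) - 1 := by
        push_cast [Nat.cast_sub (by omega : 1 ≤ 2 * m)]; ring
      have harg : ((0 / 2 : ℕ) : ℝ) * Real.pi + ((0 % 2 : ℕ) : ℝ) * δ -
          (((2 * m - 1 : ℕ) : ℝ) * Real.pi + (1 : ℕ) * δ)
          = -((δ + Real.pi) + ((m : ℝ) - 1) * (2 * Real.pi)) := by
        rw [hcast]; push_cast; ring
      rw [harg, Real.sin_neg]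
      have : Real.sin ((δ + Real.pi) + ((m : ℝ) - 1) * (2 * Real.pi))
          = Real.sin (δ + Real.pi) := by
        have := Real.sin_add_int_mul_two_pi (δ + Real.pi) ((m : ℤ) - 1)
        push_cast at this
        convert this using 2
      rw [this, Real.sin_add_pi, neg_neg]
    · have h1 : (j.val + 1) % N = j.val + 1 := Nat.mod_eq_of_lt (by omega)
      rw [h1]
      rcases Nat.even_or_odd j.val with he | ho
      · obtain ⟨k, hk⟩ := he
        have hd1 : (j.val + 1) / 2 = j.val / 2 := by omega
        have hm1' : (j.val + 1) % 2 = 1 := by omega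
        have hm0 : j.val % 2 = 0 := by omega
        rw [hd1, hm1', hm0]
        norm_num
      · obtain ⟨k, hk⟩ := ho
        have hd1 : (j.val + 1) / 2 = j.val / 2 + 1 := by omega
        have hm0 : (j.val + 1) % 2 = 0 := by omega
        have hm1' : j.val % 2 = 1 := by omega
        rw [hd1, hm0, hm1']
        have : ((j.val / 2 + 1 : ℕ) : ℝ) * Real.pi + ((0 : ℕ) : ℝ) * δ -
            (((j.val / 2 : ℕ) : ℝ) * Real.pi + ((1 : ℕ) : ℝ) * δ) = Real.pi - δ := by
          push_cast; ring
        rw [this, Real.sin_pi_sub]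
  intro j
  refine ⟨key j, ?_⟩
  have h2 := key (j - 1)
  rw [sub_add_cancel] at h2
  have : Real.sin (θ (j - 1) - θ j) = -Real.sin δ := by
    rw [← neg_sub, Real.sin_neg, h2]
  rw [key j, this, add_neg_cancel]
end

section
/- For phases θ₁, θ₂, θ₃ ∈ ℝ on a triangle with equal coupling K > 0 and zero power injections, if (θ₁,θ₂,θ₃) is a fixed point (sin(θ₂−θ₁)+sin(θ₃−θ₁) = 0, sin(θ₁−θ₂)+sin(θ₃−θ₂) = 0, sin(θ₁−θ₃)+sin(θ₂−θ₃) = 0), then the common sine value S = sin(θ₂−θ₁) = sin(θ₃−θ₂) = sin(θ₁−θ₃) satisfies S ∈ {0, sin(2π/3), sin(−2π/3)}, i.e., S = 0 or S = ±(√3)/2. -/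
open Real

theorem triangle_fixed_points (K θ₁ θ₂ θ₃ : ℝ) (hK : 0 < K)
    (h1 : Real.sin (θ₂ - θ₁) + Real.sin (θ₃ - θ₁) = 0)
    (h2 : Real.sin (θ₁ - θ₂) + Real.sin (θ₃ - θ₂) = 0)
    (h3 : Real.sin (θ₁ - θ₃) + Real.sin (θ₂ - θ₃) = 0) :
    Real.sin (θ₃ - θ₂) = Real.sin (θ₂ - θ₁) ∧
    Real.sin (θ₁ - θ₃) = Real.sin (θ₂ - θ₁) ∧
    (Real.sin (θ₂ - θ₁) = 0 ∨ Real.sin (θ₂ - θ₁) = Real.sqrt 3 / 2 ∨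
      Real.sin (θ₂ - θ₁) = -(Real.sqrt 3 / 2)) := by
  have n1 : Real.sin (θ₁ - θ₂) = -Real.sin (θ₂ - θ₁) := by
    rw [show θ₁ - θ₂ = -(θ₂ - θ₁) by ring, Real.sin_neg]
  have n2 : Real.sin (θ₂ - θ₃) = -Real.sin (θ₃ - θ₂) := by
    rw [show θ₂ - θ₃ = -(θ₃ - θ₂) by ring, Real.sin_neg]
  have n3 : Real.sin (θ₃ - θ₁) = -Real.sin (θ₁ - θ₃) := by
    rw [show θ₃ - θ₁ = -(θ₁ - θ₃) by ring, Real.sin_neg]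
  have e1 : Real.sin (θ₃ - θ₂) = Real.sin (θ₂ - θ₁) := by linarith
  have e2 : Real.sin (θ₁ - θ₃) = Real.sin (θ₂ - θ₁) := by linarith
  refine ⟨e1, e2, ?_⟩
  set S := Real.sin (θ₂ - θ₁) with hS
  by_cases hS0 : S = 0
  · exact Or.inl hS0
  · -- sin((θ₂-θ₁)+(θ₃-θ₂)) = sin(θ₃-θ₁) = -S
    have sab : Real.sin (θ₂ - θ₁) * Real.cos (θ₃ - θ₂) +
        Real.cos (θ₂ - θ₁) * Real.sin (θ₃ - θ₂) = -S := by
      have := Real.sin_add (θ₂ - θ₁) (θ₃ - θ₂)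
      rw [show θ₂ - θ₁ + (θ₃ - θ₂) = θ₃ - θ₁ by ring] at this
      rw [← this, n3, e2]
    have sbc : Real.sin (θ₃ - θ₂) * Real.cos (θ₁ - θ₃) +
        Real.cos (θ₃ - θ₂) * Real.sin (θ₁ - θ₃) = -S := by
      have := Real.sin_add (θ₃ - θ₂) (θ₁ - θ₃)
      rw [show θ₃ - θ₂ + (θ₁ - θ₃) = θ₁ - θ₂ by ring] at this
      rw [← this, n1]
    have sca : Real.sin (θ₁ - θ₃) * Real.cos (θ₂ - θ₁) +
        Real.cos (θ₁ - θ₃) * Real.sin (θ₂ - θ₁) = -S := by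
      have := Real.sin_add (θ₁ - θ₃) (θ₂ - θ₁)
      rw [show θ₁ - θ₃ + (θ₂ - θ₁) = θ₂ - θ₃ by ring] at this
      rw [← this, n2, e1]
    rw [e1] at sab sbc
    rw [e2] at sbc sca
    -- S*(cos a + cos b) = -S etc.
    have c1 : Real.cos (θ₂ - θ₁) + Real.cos (θ₃ - θ₂) = -1 := by
      have : S * (Real.cos (θ₃ - θ₂) + Real.cos (θ₂ - θ₁)) = S * (-1) := by
        rw [mul_comm] at sab ⊢; nlinarith [sab]
      have := mul_left_cancel₀ hS0 this
      linarith
    have c2 : Real.cos (θ₃ - θ₂) + Real.cos (θ₁ - θ₃) = -1 := by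
      have : S * (Real.cos (θ₁ - θ₃) + Real.cos (θ₃ - θ₂)) = S * (-1) := by
        nlinarith [sbc]
      have := mul_left_cancel₀ hS0 this
      linarith
    have c3 : Real.cos (θ₁ - θ₃) + Real.cos (θ₂ - θ₁) = -1 := by
      have : S * (Real.cos (θ₂ - θ₁) + Real.cos (θ₁ - θ₃)) = S * (-1) := by
        nlinarith [sca]
      have := mul_left_cancel₀ hS0 this
      linarith
    have hc : Real.cos (θ₂ - θ₁) = -(1/2) := by linarith
    have hsq : S ^ 2 = 3 / 4 := by
      have := Real.sin_sq_add_cos_sq (θ₂ - θ₁)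
      rw [hc] at this; nlinarith [this]
    have h3' : Real.sqrt 3 ^ 2 = 3 := Real.sq_sqrt (by norm_num)
    have : (S - Real.sqrt 3 / 2) * (S + Real.sqrt 3 / 2) = 0 := by nlinarith
    rcases mul_eq_zero.mp this with h | h
    · exact Or.inr (Or.inl (by linarith))
    · exact Or.inr (Or.inr (by linarith))
end

section
/- Consider a tree network of Kuramoto oscillators with couplings K_e > 0 on the N−1 edges and injections P with ∑ P_j = 0, and suppose the unique flow solution F satisfies |F_e| < K_e for all edges e. Then up to a global phase shift there are exactly 2^{N−1} fixed points, obtained by choosing for each edge e the phase difference Δ_e = arcsin(F_e/K_e) or Δ_e = π − arcsin(F_e/K_e). -/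
/-!
Every fixed point carries a flow: `K_jℓ sin(θ_ℓ - θ_j) - F_jℓ` is a circulation, and a circulation
on a forest vanishes, since its value on an edge is the total divergence of the component cut off
by that edge. As `|F/K| < 1`, each edge then offers exactly two phase differences, `arcsin (F/K)`
and `π - arcsin (F/K)`, told apart by the sign of their cosine; on a tree any such choice of
differences integrates, uniquely once `θ₀ = 0`, along the paths from the root. So fixed points
correspond to sign patterns on the `N - 1` edges.
-/

open Real Finset

theorem Finset.sum_sum_eq_sum_sum_compl_of_antisymm {V : Type*} [Fintype V] [DecidableEq V]
    {g : V → V → ℝ} (hanti : ∀ j ℓ, g j ℓ = -g ℓ j) (S : Finset V) :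
    ∑ x ∈ S, ∑ ℓ, g x ℓ = ∑ x ∈ S, ∑ ℓ ∈ Sᶜ, g x ℓ := by
  have hinner : ∑ x ∈ S, ∑ ℓ ∈ S, g x ℓ = 0 := by
    have : ∑ x ∈ S, ∑ ℓ ∈ S, g x ℓ = -∑ x ∈ S, ∑ ℓ ∈ S, g x ℓ := by
      conv_lhs => rw [sum_comm]
      simp only [← sum_neg_distrib, ← hanti]
    linarith
  simp only [← sum_add_sum_compl S, sum_add_distrib, hinner, zero_add]

namespace Real.Angle

theorem cos_ne_zero_of_abs_sin_lt_one {a : Angle} (h : |a.sin| < 1) : a.cos ≠ 0 := by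
  intro hc
  have := cos_sq_add_sin_sq a
  rw [hc] at this
  nlinarith [sq_abs a.sin, abs_nonneg a.sin]

theorem eq_of_sin_eq_of_cos_nonneg_iff {a b : Angle} (hs : a.sin = b.sin) (hc : a.cos ≠ 0)
    (hsign : 0 ≤ a.cos ↔ 0 ≤ b.cos) : a = b := by
  refine (sin_eq_iff_eq_or_add_eq_pi.1 hs).resolve_right fun hab => ?_
  have : b.cos = -a.cos := by rw [eq_sub_of_add_eq' hab, sub_eq_neg_add, cos_add_pi, cos_neg]
  rw [this, neg_nonneg] at hsign
  rcases hc.lt_or_gt with h | h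
  · exact absurd (hsign.2 h.le) h.not_ge
  · exact absurd (hsign.1 h.le) h.not_ge

noncomputable def arcsinBranch (s : ℝ) (b : Bool) : Angle :=
  if b then (arcsin s : Angle) else (π - arcsin s : ℝ)

theorem sin_arcsinBranch {s : ℝ} (hs : |s| ≤ 1) (b : Bool) : (arcsinBranch s b).sin = s := by
  obtain ⟨h₁, h₂⟩ := abs_le.1 hs
  cases b <;> simp only [arcsinBranch, Bool.false_eq_true, reduceIte, sin_coe, Real.sin_pi_sub,
    sin_arcsin h₁ h₂]

theorem decide_cos_arcsinBranch_nonneg {s : ℝ} (hs : |s| < 1) (b : Bool) :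
    decide (0 ≤ (arcsinBranch s b).cos) = b := by
  have hpos : 0 < √(1 - s ^ 2) := Real.sqrt_pos.2 (by nlinarith [sq_abs s, abs_nonneg s])
  cases b <;> simp only [arcsinBranch, Bool.false_eq_true, reduceIte, cos_coe, Real.cos_pi_sub,
    cos_arcsin, neg_nonneg, hpos.not_ge, hpos.le, decide_false, decide_true]

theorem arcsinBranch_neg (s : ℝ) (b : Bool) : arcsinBranch (-s) b = -arcsinBranch s b := by
  cases b
  · simp only [arcsinBranch, arcsin_neg, Bool.false_eq_true, if_false, sub_neg_eq_add, coe_add,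
      coe_sub, neg_sub, sub_coe_pi_eq_add_coe_pi]
    abel
  · simp [arcsinBranch, arcsin_neg]

end Real.Angle

namespace SimpleGraph

variable {V : Type*} {G : SimpleGraph V}

theorem IsAcyclic.eq_zero_of_circulation [Fintype V] (hG : G.IsAcyclic) {g : V → V → ℝ}
    (hanti : ∀ j ℓ, g j ℓ = -g ℓ j) (hsupp : ∀ j ℓ, ¬G.Adj j ℓ → g j ℓ = 0)
    (hdiv : ∀ j, ∑ ℓ, g j ℓ = 0) (a b : V) : g a b = 0 := by
  classical
  by_cases hab : G.Adj a b
  swap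
  · exact hsupp a b hab
  -- `S` is the side of `a` once the bridge `ab` is cut; `ab` is the only edge leaving it.
  set S := univ.filter ((G.deleteEdges {s(a, b)}).Reachable a)
  have haS : a ∈ S := by simp [S]
  have hbS : b ∉ S := by
    simpa [S] using isBridge_iff.mp (isAcyclic_iff_forall_adj_isBridge.mp hG hab)
  have hcut : ∀ p ∈ S ×ˢ Sᶜ, p ≠ (a, b) → g p.1 p.2 = 0 := by
    rintro ⟨x, ℓ⟩ hp hne
    obtain ⟨hx, hℓ⟩ := mem_product.1 hp
    refine hsupp x ℓ fun hxℓ => ?_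
    have : s(x, ℓ) = s(a, b) := by
      by_contra h
      simp only [S, mem_compl, mem_filter, mem_univ, true_and] at hx hℓ
      exact hℓ (hx.trans (deleteEdges_adj.2 ⟨hxℓ, h⟩).reachable)
    rcases Sym2.eq_iff.1 this with ⟨rfl, rfl⟩ | ⟨rfl, rfl⟩
    · exact hne rfl
    · exact hbS hx
  calc g a b = ∑ x ∈ S, ∑ ℓ ∈ Sᶜ, g x ℓ := by
        rw [← sum_product']
        exact (sum_eq_single_of_mem (a, b) (mem_product.2 ⟨haS, mem_compl.2 hbS⟩) hcut).symm
    _ = ∑ x ∈ S, ∑ ℓ, g x ℓ := (sum_sum_eq_sum_sum_compl_of_antisymm hanti S).symm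
    _ = 0 := sum_eq_zero fun x _ => hdiv x

variable {A : Type*} [AddCommGroup A]

theorem Preconnected.eq_of_sub_eq (hG : G.Preconnected) {θ θ' : V → A} {r : V}
    (hr : θ r = θ' r) (hsub : ∀ j ℓ, G.Adj j ℓ → θ ℓ - θ j = θ' ℓ - θ' j) : θ = θ' := by
  have key : ∀ {u v : V}, G.Walk u v → θ u = θ' u → θ v = θ' v := by
    intro u v p
    induction p with
    | nil => exact id
    | cons h _ ih => exact fun hu => ih (by have := hsub _ _ h; rwa [hu, sub_left_inj] at this)
  funext v
  exact key (hG r v).some hr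

def Walk.dartSum (δ : V → V → A) {u v : V} (p : G.Walk u v) : A :=
  (p.darts.map fun d => δ d.fst d.snd).sum

@[simp]
theorem Walk.dartSum_nil (δ : V → V → A) {u : V} : (Walk.nil : G.Walk u u).dartSum δ = 0 := rfl

@[simp]
theorem Walk.dartSum_append (δ : V → V → A) {u v w : V} (p : G.Walk u v) (q : G.Walk v w) :
    (p.append q).dartSum δ = p.dartSum δ + q.dartSum δ := by
  simp [dartSum, darts_append]

@[simp]
theorem Walk.dartSum_concat (δ : V → V → A) {u v w : V} (p : G.Walk u v) (h : G.Adj v w) :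
    (p.concat h).dartSum δ = p.dartSum δ + δ v w := by
  simp [dartSum, darts_concat]

theorem IsTree.dartSum_path_of_adj (hG : G.IsTree) {δ : V → V → A}
    (hδ : ∀ j ℓ, G.Adj j ℓ → δ ℓ j = -δ j ℓ) {r j ℓ : V} {p : G.Walk r j} {q : G.Walk r ℓ}
    (hp : p.IsPath) (hq : q.IsPath) (h : G.Adj j ℓ) : q.dartSum δ = p.dartSum δ + δ j ℓ := by
  classical
  by_cases hℓ : ℓ ∈ p.support
  · -- `p` runs through `ℓ` and then takes the edge `ℓj`
    have hq' : q = p.takeUntil ℓ hℓ := (hG.existsUnique_path r ℓ).unique hq (hp.takeUntil hℓ)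
    have hdrop : p.dropUntil ℓ hℓ = Walk.cons h.symm Walk.nil :=
      (hG.existsUnique_path ℓ j).unique (hp.dropUntil hℓ) (by simp [h.ne.symm])
    rw [← p.take_spec hℓ, Walk.dartSum_append, hdrop, ← hq', hδ ℓ j h.symm]
    simp [Walk.dartSum]
  · have hconcat : (p.concat h).IsPath := by
      rw [← Walk.isPath_reverse_iff, Walk.reverse_concat, Walk.cons_isPath_iff]
      exact ⟨hp.reverse, by simpa using hℓ⟩
    rw [(hG.existsUnique_path r ℓ).unique hq hconcat, Walk.dartSum_concat]

theorem IsTree.exists_sub_eq (hG : G.IsTree) (r : V) {δ : V → V → A}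
    (hδ : ∀ j ℓ, G.Adj j ℓ → δ ℓ j = -δ j ℓ) :
    ∃ θ : V → A, θ r = 0 ∧ ∀ j ℓ, G.Adj j ℓ → θ ℓ - θ j = δ j ℓ := by
  choose path hpath _ using hG.existsUnique_path r
  refine ⟨fun v => (path v).dartSum δ, ?_, fun j ℓ h => ?_⟩
  · dsimp only
    rw [(hG.existsUnique_path r r).unique (hpath r) .nil, Walk.dartSum_nil]
  · dsimp only
    rw [hG.dartSum_path_of_adj hδ (hpath j) (hpath ℓ) h, add_sub_cancel_left]

/-- Records on which branch, `arcsinBranch _ true` or `arcsinBranch _ false`, the phase difference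
across each edge lies. -/
noncomputable def edgeCosSign (G : SimpleGraph V) (θ : V → Angle) (e : G.edgeSet) : Bool :=
  Sym2.lift ⟨fun j ℓ => decide (0 ≤ (θ ℓ - θ j).cos), fun j ℓ => by
    dsimp only
    rw [← Angle.cos_neg, neg_sub]⟩ e.1

@[simp]
theorem edgeCosSign_mk (θ : V → Angle) {j ℓ : V} (h : s(j, ℓ) ∈ G.edgeSet) :
    G.edgeCosSign θ ⟨s(j, ℓ), h⟩ = decide (0 ≤ (θ ℓ - θ j).cos) := rfl

theorem IsTree.ncard_setOf_sin_sub_eq [Finite V] (hG : G.IsTree) (r : V) {c : V → V → ℝ}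
    (hanti : ∀ j ℓ, G.Adj j ℓ → c ℓ j = -c j ℓ) (hc : ∀ j ℓ, G.Adj j ℓ → |c j ℓ| < 1) :
    {θ : V → Angle | θ r = 0 ∧ ∀ j ℓ, G.Adj j ℓ → (θ ℓ - θ j).sin = c j ℓ}.ncard =
      2 ^ Nat.card G.edgeSet := by
  set S := {θ : V → Angle | θ r = 0 ∧ ∀ j ℓ, G.Adj j ℓ → (θ ℓ - θ j).sin = c j ℓ}
  have hinj : S.InjOn G.edgeCosSign := by
    rintro θ ⟨hθr, hθ⟩ θ' ⟨hθ'r, hθ'⟩ hsign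
    refine hG.1.preconnected.eq_of_sub_eq (hθr.trans hθ'r.symm) fun j ℓ h => ?_
    refine Angle.eq_of_sin_eq_of_cos_nonneg_iff ((hθ j ℓ h).trans (hθ' j ℓ h).symm)
      (Angle.cos_ne_zero_of_abs_sin_lt_one (by rw [hθ j ℓ h]; exact hc j ℓ h)) ?_
    exact decide_eq_decide.1 (congrFun hsign ⟨s(j, ℓ), h⟩)
  have hsurj : ∀ t : G.edgeSet → Bool, ∃ θ ∈ S, G.edgeCosSign θ = t := by
    intro t
    classical
    obtain ⟨δ, hδ⟩ : ∃ δ : V → V → Angle,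
        ∀ j ℓ (h : G.Adj j ℓ), δ j ℓ = Angle.arcsinBranch (c j ℓ) (t ⟨s(j, ℓ), h⟩) :=
      ⟨fun j ℓ => if h : G.Adj j ℓ then Angle.arcsinBranch (c j ℓ) (t ⟨s(j, ℓ), h⟩) else 0,
        fun j ℓ h => dif_pos h⟩
    have hδanti : ∀ j ℓ, G.Adj j ℓ → δ ℓ j = -δ j ℓ := fun j ℓ h => by
      rw [hδ ℓ j h.symm, hδ j ℓ h, hanti j ℓ h, Angle.arcsinBranch_neg]
      congr 3
      exact Subtype.ext Sym2.eq_swap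
    obtain ⟨θ, hθr, hθ⟩ := hG.exists_sub_eq r hδanti
    refine ⟨θ, ⟨hθr, fun j ℓ h => ?_⟩, funext fun ⟨e, he⟩ => ?_⟩
    · rw [hθ j ℓ h, hδ j ℓ h, Angle.sin_arcsinBranch (hc j ℓ h).le]
    · induction e using Sym2.ind with
      | h j ℓ => rw [edgeCosSign_mk, hθ j ℓ he, hδ j ℓ he,
          Angle.decide_cos_arcsinBranch_nonneg (hc j ℓ he)]
  have himage : G.edgeCosSign '' S = Set.univ :=
    Set.eq_univ_of_forall fun t => (hsurj t).imp fun _ => id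
  rw [← hinj.ncard_image, himage, Set.ncard_univ, Nat.card_fun,
    Nat.card_eq_fintype_card (α := Bool), Fintype.card_bool]

theorem IsAcyclic.kuramoto_fixed_iff [Fintype V] (hG : G.IsAcyclic) {K F : V → V → ℝ}
    {P : V → ℝ} (hKsymm : ∀ j ℓ, K j ℓ = K ℓ j) (hKzero : ∀ j ℓ, ¬G.Adj j ℓ → K j ℓ = 0)
    (hFanti : ∀ j ℓ, F j ℓ = -F ℓ j) (hFcons : ∀ j, P j + ∑ ℓ, F j ℓ = 0)
    (hFzero : ∀ j ℓ, ¬G.Adj j ℓ → F j ℓ = 0) (θ : V → Angle) :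
    (∀ j, P j + ∑ ℓ, K j ℓ * (θ ℓ - θ j).sin = 0) ↔
      ∀ j ℓ, G.Adj j ℓ → K j ℓ * (θ ℓ - θ j).sin = F j ℓ := by
  constructor
  · intro hfix j ℓ _
    refine sub_eq_zero.1 (hG.eq_zero_of_circulation
      (g := fun j ℓ => K j ℓ * (θ ℓ - θ j).sin - F j ℓ) (fun j ℓ => ?_) (fun j ℓ h => ?_)
      (fun j => ?_) j ℓ)
    · rw [hKsymm, hFanti j ℓ, ← neg_sub (θ j), Angle.sin_neg]
      ring
    · simp [hKzero j ℓ h, hFzero j ℓ h]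
    · rw [Finset.sum_sub_distrib]
      linarith [hfix j, hFcons j]
  · intro hflow j
    have : ∀ ℓ, K j ℓ * (θ ℓ - θ j).sin = F j ℓ := fun ℓ => by
      by_cases h : G.Adj j ℓ
      · exact hflow j ℓ h
      · rw [hKzero j ℓ h, hFzero j ℓ h, zero_mul]
    simp only [this, hFcons]

end SimpleGraph

theorem tree_fixed_point_count_general (N : ℕ) (hN : 0 < N) (G : SimpleGraph (Fin N))
    (htree : G.IsTree)
    (K : Matrix (Fin N) (Fin N) ℝ)
    (hKsymm : ∀ j ℓ, K j ℓ = K ℓ j)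
    (hKpos : ∀ j ℓ, G.Adj j ℓ → 0 < K j ℓ)
    (hKzero : ∀ j ℓ, ¬G.Adj j ℓ → K j ℓ = 0)
    (P : Fin N → ℝ)
    (F : Fin N → Fin N → ℝ)
    (hFanti : ∀ j ℓ, F j ℓ = -F ℓ j)
    (hFcons : ∀ j, P j + ∑ ℓ, F j ℓ = 0)
    (hFzero : ∀ j ℓ, ¬G.Adj j ℓ → F j ℓ = 0)
    (hFlt : ∀ j ℓ, G.Adj j ℓ → |F j ℓ| < K j ℓ) :
    {θ : Fin N → Real.Angle | θ ⟨0, hN⟩ = 0 ∧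
        ∀ j, P j + ∑ ℓ, K j ℓ * Real.Angle.sin (θ ℓ - θ j) = 0}.ncard
      = 2 ^ (N - 1) := by
  classical
  have hfixed : {θ : Fin N → Real.Angle | θ ⟨0, hN⟩ = 0 ∧
      ∀ j, P j + ∑ ℓ, K j ℓ * Real.Angle.sin (θ ℓ - θ j) = 0} =
      {θ | θ ⟨0, hN⟩ = 0 ∧ ∀ j ℓ, G.Adj j ℓ → (θ ℓ - θ j).sin = F j ℓ / K j ℓ} := by
    refine Set.ext fun θ => and_congr_right' ?_
    rw [htree.isAcyclic.kuramoto_fixed_iff hKsymm hKzero hFanti hFcons hFzero]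
    exact forall₃_congr fun j ℓ h => by rw [eq_div_iff (hKpos j ℓ h).ne', mul_comm]
  have hedges : Nat.card G.edgeSet + 1 = N := by
    rw [Nat.card_eq_fintype_card, ← SimpleGraph.edgeFinset_card, htree.card_edgeFinset,
      Fintype.card_fin]
  rw [hfixed, htree.ncard_setOf_sin_sub_eq ⟨0, hN⟩ (fun j ℓ _ => by rw [hFanti, hKsymm, neg_div])
    fun j ℓ h => by
      rw [abs_div, abs_of_pos (hKpos j ℓ h), div_lt_one (hKpos j ℓ h)]; exact hFlt j ℓ h,
    Nat.eq_sub_of_add_eq hedges]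

theorem tree_fixed_point_count (N : ℕ) (hN : 0 < N) (G : SimpleGraph (Fin N))
    (htree : G.IsTree)
    (K : Matrix (Fin N) (Fin N) ℝ)
    (hKsymm : ∀ j ℓ, K j ℓ = K ℓ j)
    (hKpos : ∀ j ℓ, G.Adj j ℓ → 0 < K j ℓ)
    (hKzero : ∀ j ℓ, ¬G.Adj j ℓ → K j ℓ = 0)
    (P : Fin N → ℝ) (hP : ∑ j, P j = 0)
    (F : Fin N → Fin N → ℝ)
    (hFanti : ∀ j ℓ, F j ℓ = -F ℓ j)
    (hFcons : ∀ j, P j + ∑ ℓ, F j ℓ = 0)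
    (hFzero : ∀ j ℓ, ¬G.Adj j ℓ → F j ℓ = 0)
    (hFlt : ∀ j ℓ, G.Adj j ℓ → |F j ℓ| < K j ℓ) :
    {θ : Fin N → Real.Angle | θ ⟨0, hN⟩ = 0 ∧
        ∀ j, P j + ∑ ℓ, K j ℓ * Real.Angle.sin (θ ℓ - θ j) = 0}.ncard
      = 2 ^ (N - 1) :=
  tree_fixed_point_count_general N hN G htree K hKsymm hKpos hKzero P F hFanti hFcons hFzero hFlt
end

section
/- In the setting of a tree network of Kuramoto oscillators whose unique flow solution satisfies |F_e| < K_e on all edges: any fixed point for which at least one edge has cos(θ_i − θ_j) < 0 is linearly unstable, i.e., the Hessian of the potential has a negative eigenvalue. Specifically, if edge e₀ = (u,v) has cos(θ_u − θ_v) < 0, and V₁ is the vertex set of the component of the tree minus e₀ containing u, then the indicator vector of V₁ is a test vector w with wᵀMw = K_{e₀}cos(θ_u − θ_v) < 0. -/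
/-!
The Hessian `M` is the weighted Laplacian of the edge weights `K j ℓ * cos (θ j - θ ℓ)`, so
the quadratic form of the indicator of a vertex set `S` is the total weight of the edges
leaving `S`. In a tree every edge `uv` is a bridge, so the only edge leaving the component
of `u` in the tree minus `uv` is `uv` itself; the form therefore equals
`K u v * cos (θ u - θ v) < 0`.
-/

open Real Matrix Finset

section WeightedLaplacian

variable {V R : Type*} [Fintype V] [DecidableEq V] [CommRing R]

def weightedLaplacian (c : V → V → R) : Matrix V V R :=
  Matrix.of fun j ℓ => if j = ℓ then ∑ k, c j k else -c j ℓ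

variable {c : V → V → R}

theorem weightedLaplacian_eq (hc : ∀ j, c j j = 0) :
    weightedLaplacian c = diagonal (fun j => ∑ k, c j k) - Matrix.of c := by
  ext j ℓ
  by_cases h : j = ℓ
  · subst h; simp [weightedLaplacian, hc]
  · simp [weightedLaplacian, h]

theorem weightedLaplacian_mulVec (hc : ∀ j, c j j = 0) (w : V → R) (j : V) :
    (weightedLaplacian c *ᵥ w) j = ∑ ℓ, c j ℓ * (w j - w ℓ) := by
  rw [weightedLaplacian_eq hc, sub_mulVec, Pi.sub_apply, mulVec_diagonal]
  simp [mulVec, dotProduct, mul_sub, sum_mul]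

theorem dotProduct_weightedLaplacian_mulVec (hc : ∀ j, c j j = 0) (w : V → R) :
    w ⬝ᵥ (weightedLaplacian c *ᵥ w) = ∑ j, ∑ ℓ, c j ℓ * (w j * (w j - w ℓ)) := by
  simp only [dotProduct, weightedLaplacian_mulVec hc, mul_sum]
  exact sum_congr rfl fun _ _ => sum_congr rfl fun _ _ => by ring

theorem dotProduct_weightedLaplacian_mulVec_indicator (hc : ∀ j, c j j = 0)
    (p : V → Prop) [DecidablePred p] :
    let w : V → R := fun j => if p j then 1 else 0
    w ⬝ᵥ (weightedLaplacian c *ᵥ w) =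
      ∑ j, ∑ ℓ, if p j ∧ ¬p ℓ then c j ℓ else 0 := by
  intro w
  rw [dotProduct_weightedLaplacian_mulVec hc]
  refine sum_congr rfl fun j _ => sum_congr rfl fun ℓ _ => ?_
  by_cases hj : p j <;> by_cases hℓ : p ℓ <;> simp [w, hj, hℓ]

end WeightedLaplacian

namespace SimpleGraph

variable {V : Type*} {G : SimpleGraph V} {u v j ℓ : V}

theorem eq_of_adj_of_reachable_deleteEdges (hadj : G.Adj j ℓ)
    (hj : (G.deleteEdges {s(u, v)}).Reachable u j)
    (hℓ : ¬(G.deleteEdges {s(u, v)}).Reachable u ℓ) : j = u ∧ ℓ = v := by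
  by_cases he : s(j, ℓ) = s(u, v)
  · rcases Sym2.eq_iff.mp he with h | ⟨rfl, rfl⟩
    · exact h
    · exact absurd (Reachable.refl _) hℓ
  · exact absurd (hj.trans (deleteEdges_adj.mpr ⟨hadj, he⟩).reachable) hℓ

variable [Fintype V] [DecidableEq V] {R : Type*} [CommRing R]

theorem dotProduct_weightedLaplacian_mulVec_bridge_component {c : V → V → R}
    (hc : ∀ j ℓ, ¬G.Adj j ℓ → c j ℓ = 0) (hbr : G.IsBridge s(u, v))
    [DecidablePred ((G.deleteEdges {s(u, v)}).Reachable u)] :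
    let w : V → R := fun j => if (G.deleteEdges {s(u, v)}).Reachable u j then 1 else 0
    w ⬝ᵥ (weightedLaplacian c *ᵥ w) = c u v := by
  intro w
  rw [dotProduct_weightedLaplacian_mulVec_indicator fun j => hc j j G.irrefl]
  have hcut : ∀ j ℓ, (G.deleteEdges {s(u, v)}).Reachable u j ∧
      ¬(G.deleteEdges {s(u, v)}).Reachable u ℓ → c j ℓ ≠ 0 → j = u ∧ ℓ = v :=
    fun j ℓ ⟨hj, hℓ⟩ hne => eq_of_adj_of_reachable_deleteEdges
      (not_not.mp fun h => hne (hc j ℓ h)) hj hℓ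
  rw [sum_eq_single u, sum_eq_single v, if_pos ⟨Reachable.refl u, isBridge_iff.mp hbr⟩]
  · intro ℓ _ hℓv
    split_ifs with h
    · by_contra hne; exact hℓv (hcut u ℓ h hne).2
    · rfl
  · simp
  · intro j _ hju
    refine sum_eq_zero fun ℓ _ => ?_
    split_ifs with h
    · by_contra hne; exact hju (hcut j ℓ h hne).1
    · rfl
  · simp

end SimpleGraph

open scoped Classical in
theorem tree_nonnormal_unstable_general (N : ℕ) (G : SimpleGraph (Fin N))
    (htree : G.IsTree)
    (K : Matrix (Fin N) (Fin N) ℝ)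
    (hKpos : ∀ j ℓ, G.Adj j ℓ → 0 < K j ℓ)
    (hKzero : ∀ j ℓ, ¬G.Adj j ℓ → K j ℓ = 0)
    (θ : Fin N → ℝ)
    (M : Matrix (Fin N) (Fin N) ℝ)
    (hM : ∀ j ℓ, M j ℓ = if j = ℓ then ∑ k, K j k * Real.cos (θ j - θ k)
      else -(K j ℓ * Real.cos (θ j - θ ℓ)))
    (u v : Fin N) (huv : G.Adj u v)
    (hcosneg : Real.cos (θ u - θ v) < 0)
    (w : Fin N → ℝ)
    (hw : ∀ j, w j = if (G.deleteEdges {s(u, v)}).Reachable u j then 1 else 0) :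
    dotProduct w (M.mulVec w) = K u v * Real.cos (θ u - θ v) ∧
    dotProduct w (M.mulVec w) < 0 ∧
    ¬M.PosSemidef := by
  have hM' : M = weightedLaplacian fun j ℓ => K j ℓ * cos (θ j - θ ℓ) := by
    ext j ℓ; rw [hM]; rfl
  have hbr : G.IsBridge s(u, v) :=
    SimpleGraph.isAcyclic_iff_forall_adj_isBridge.mp htree.isAcyclic huv
  have hform : w ⬝ᵥ (M *ᵥ w) = K u v * cos (θ u - θ v) := by
    rw [funext hw, hM']
    exact SimpleGraph.dotProduct_weightedLaplacian_mulVec_bridge_component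
      (fun j ℓ h => by simp [hKzero j ℓ h]) hbr
  have hneg : w ⬝ᵥ (M *ᵥ w) < 0 := hform ▸ mul_neg_of_pos_of_neg (hKpos u v huv) hcosneg
  exact ⟨hform, hneg, fun hpsd => (hpsd.dotProduct_mulVec_nonneg w).not_gt hneg⟩

open scoped Classical in
theorem tree_nonnormal_unstable (N : ℕ) (G : SimpleGraph (Fin N))
    (htree : G.IsTree)
    (K : Matrix (Fin N) (Fin N) ℝ)
    (hKsymm : ∀ j ℓ, K j ℓ = K ℓ j)
    (hKpos : ∀ j ℓ, G.Adj j ℓ → 0 < K j ℓ)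
    (hKzero : ∀ j ℓ, ¬G.Adj j ℓ → K j ℓ = 0)
    (θ : Fin N → ℝ)
    (M : Matrix (Fin N) (Fin N) ℝ)
    (hM : ∀ j ℓ, M j ℓ = if j = ℓ then ∑ k, K j k * Real.cos (θ j - θ k)
      else -(K j ℓ * Real.cos (θ j - θ ℓ)))
    (u v : Fin N) (huv : G.Adj u v)
    (hcosneg : Real.cos (θ u - θ v) < 0)
    (w : Fin N → ℝ)
    (hw : ∀ j, w j = if (G.deleteEdges {s(u, v)}).Reachable u j then 1 else 0) :
    dotProduct w (M.mulVec w) = K u v * Real.cos (θ u - θ v) ∧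
    dotProduct w (M.mulVec w) < 0 ∧
    ¬M.PosSemidef :=
  tree_nonnormal_unstable_general N G htree K hKpos hKzero θ M hM u v huv hcosneg w hw
end

section
/- For a single cycle of N nodes in normal operation, the winding number satisfies the strict bounds −N/4 < ϖ(f) < N/4 for all admissible cycle flows f; hence the number of normal-operation fixed points is at most 2⌊N/4⌋ + 1. -/
open Real

theorem winding_number_bounds_and_count (N : ℕ) (hN : 3 ≤ N)
    (K F0 : Fin N → ℝ) (hK : ∀ e, 0 < K e)
    (w : ℝ → ℝ)
    (hw : ∀ f : ℝ, w f = (1 / (2 * Real.pi)) * ∑ e, Real.arcsin ((F0 e + f) / K e)) :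
    (∀ f : ℝ, (∀ e, |F0 e + f| < K e) →
      -(N : ℝ) / 4 < w f ∧ w f < (N : ℝ) / 4) ∧
    {f : ℝ | (∀ e, |F0 e + f| < K e) ∧ ∃ z : ℤ, w f = z}.ncard
      ≤ 2 * (N / 4) + 1 := by
  have hpi : (0:ℝ) < Real.pi := Real.pi_pos
  haveI : NeZero N := ⟨by omega⟩
  have habs : ∀ (f : ℝ), (∀ e, |F0 e + f| < K e) → ∀ e : Fin N,
      |(F0 e + f) / K e| < 1 := by
    intro f hf e
    rw [abs_div, abs_of_pos (hK e), div_lt_one (hK e)]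
    exact hf e
  have hbound : ∀ f : ℝ, (∀ e, |F0 e + f| < K e) →
      -(N : ℝ) / 4 < w f ∧ w f < (N : ℝ) / 4 := by
    intro f hf
    have h1 : ∀ e : Fin N, Real.arcsin ((F0 e + f) / K e) < Real.pi / 2 := by
      intro e
      rw [Real.arcsin_lt_pi_div_two]
      have := abs_lt.1 (habs f hf e); exact this.2
    have h2 : ∀ e : Fin N, -(Real.pi/2) < Real.arcsin ((F0 e + f) / K e) := by
      intro e
      rw [Real.neg_pi_div_two_lt_arcsin]
      have := abs_lt.1 (habs f hf e); exact this.1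
    have hs1 : ∑ e, Real.arcsin ((F0 e + f) / K e) < (N:ℝ) * (Real.pi/2) := by
      calc ∑ e, Real.arcsin ((F0 e + f) / K e)
          < ∑ _e : Fin N, Real.pi/2 :=
            Finset.sum_lt_sum_of_nonempty Finset.univ_nonempty (fun e _ => h1 e)
        _ = (N:ℝ) * (Real.pi/2) := by
            simp [Finset.sum_const, Finset.card_univ, nsmul_eq_mul]
    have hs2 : -((N:ℝ) * (Real.pi/2)) < ∑ e, Real.arcsin ((F0 e + f) / K e) := by
      have : ∑ _e : Fin N, -(Real.pi/2) < ∑ e, Real.arcsin ((F0 e + f) / K e) :=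
        Finset.sum_lt_sum_of_nonempty Finset.univ_nonempty (fun e _ => h2 e)
      simpa [Finset.sum_const, Finset.card_univ, nsmul_eq_mul, mul_neg] using this
    have hc : (0:ℝ) < 1 / (2 * Real.pi) := by positivity
    have heq : (1 / (2 * Real.pi)) * ((N:ℝ) * (Real.pi/2)) = (N:ℝ)/4 := by
      field_simp; ring
    constructor
    · rw [hw]
      have := mul_lt_mul_of_pos_left hs2 hc
      rw [mul_neg, heq] at this
      linarith
    · rw [hw]
      have := mul_lt_mul_of_pos_left hs1 hc
      rw [heq] at this
      exact this
  have hmono : ∀ f1 f2 : ℝ, (∀ e, |F0 e + f1| < K e) → (∀ e, |F0 e + f2| < K e) →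
      f1 < f2 → w f1 < w f2 := by
    intro f1 f2 h1 h2 hlt
    rw [hw, hw]
    apply mul_lt_mul_of_pos_left _ (by positivity)
    apply Finset.sum_lt_sum_of_nonempty Finset.univ_nonempty
    intro e _
    have m1 : (F0 e + f1) / K e ∈ Set.Icc (-1:ℝ) 1 := by
      have := abs_lt.1 (habs f1 h1 e)
      exact ⟨le_of_lt this.1, le_of_lt this.2⟩
    have m2 : (F0 e + f2) / K e ∈ Set.Icc (-1:ℝ) 1 := by
      have := abs_lt.1 (habs f2 h2 e)
      exact ⟨le_of_lt this.1, le_of_lt this.2⟩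
    exact Real.strictMonoOn_arcsin m1 m2
      ((div_lt_div_iff_of_pos_right (hK e)).mpr (by linarith))
  refine ⟨hbound, ?_⟩
  classical
  have key : {f : ℝ | (∀ e, |F0 e + f| < K e) ∧ ∃ z : ℤ, w f = z}.ncard
      ≤ (Finset.Icc (-(N/4 : ℤ)) (N/4 : ℤ) : Finset ℤ).card := by
    rw [← Set.ncard_coe_finset]
    apply Set.ncard_le_ncard_of_injOn (fun f => ⌊w f⌋)
    · rintro f ⟨hf, z, hz⟩
      have hb := hbound f hf
      have hz' : ⌊w f⌋ = z := by rw [hz]; exact Int.floor_intCast z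
      have hzu : (4 * z : ℝ) < N := by
        have : (z:ℝ) < (N:ℝ)/4 := hz ▸ hb.2
        linarith
      have hzl : -(N:ℝ) < 4 * z := by
        have : -(N:ℝ)/4 < (z:ℝ) := hz ▸ hb.1
        linarith
      have hu : 4 * z < (N:ℤ) := by exact_mod_cast hzu
      have hl : -(N:ℤ) < 4 * z := by exact_mod_cast hzl
      simp only [Finset.coe_Icc, Set.mem_Icc, hz']
      omega
    · rintro f1 ⟨hf1, z1, hz1⟩ f2 ⟨hf2, z2, hz2⟩ hfe
      by_contra hne
      rcases lt_or_gt_of_ne hne with h | h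
      · have := hmono f1 f2 hf1 hf2 h
        rw [hz1, hz2] at this
        simp only [hz1, hz2, Int.floor_intCast] at hfe
        rw [hfe] at this; exact lt_irrefl _ this
      · have := hmono f2 f1 hf2 hf1 h
        rw [hz1, hz2] at this
        simp only [hz1, hz2, Int.floor_intCast] at hfe
        rw [hfe] at this; exact lt_irrefl _ this
  refine key.trans ?_
  rw [Int.card_Icc]
  omega
end
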